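/- Let K be the complete graph on a finite vertex set V with symmetric positive real edge weights w, and write dist(a,b) = dist_{K,w}(a,b). Let k ≥ 1 be an integer with |V| ≥ k+1, and assume that for every vertex x the distances dist(x,y), y ≠ x, are pairwise distinct; let S(x) denote the set of the k vertices nearest to x. Let δ ≥ 0, let R ⊆ V, let d'' : V × V → ℝ satisfy dist(r,z) ≤ d''(r,z) ≤ (1+δ)·dist(r,z) for all r ∈ R and z ∈ V, and fix a vertex u together with a function w' : V → ℝ satisfying, for every vertex y ≠ u, dist(u,y) ≤ w'(y) ≤ w(uy) and w'(y) ≤ dist(u,z) + w(zy) for every z ∈ S(u). Define a weighted graph (G_u, w_u) on V whose edge weights are: w_u(a,b) is the minimum of the applicable values among (i) w'(b) if a = u (resp. w'(a) if b = u), (ii) dist(a,b) if b ∈ S(a) or a ∈ S(b), (iii) d''(a,b) if a ∈ R or b ∈ R; and there is no edge ab if none of (i)–(iii) applies. Then for every vertex v ≠ u such that R ∩ S(u) ≠ ∅ and R ∩ S(v) ≠ ∅: dist(u,v) ≤ dist_{G_u,w_u}(u,v) ≤ (2 + 2δ)·dist(u,v). -/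

import Mathlib

open SimpleGraph
open scoped ENNReal

noncomputable section

/-- The weight of a walk: the sum of the weights of its edges (with multiplicity). -/
def walkWeight {V : Type*} {G : SimpleGraph V} (w : Sym2 V → ℝ) {u v : V}
    (p : G.Walk u v) : ℝ :=
  (p.edges.map w).sum

/-- The distance between `u` and `v`: the minimum weight of a `u`–`v` walk (`∞` if none). -/
def wdist {V : Type*} (G : SimpleGraph V) (w : Sym2 V → ℝ) (u v : V) : ℝ≥0∞ :=
  ⨅ p : G.Walk u v, ENNReal.ofReal (walkWeight w p)

/-- The `h`-hop distance between `u` and `v`: the minimum weight of a `u`–`v` walk with at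
most `h` edges (`∞` if none). -/
def hopDist {V : Type*} (G : SimpleGraph V) (w : Sym2 V → ℝ) (h : ℕ) (u v : V) : ℝ≥0∞ :=
  ⨅ p : {p : G.Walk u v // p.length ≤ h}, ENNReal.ofReal (walkWeight w p.1)

/-!
Every edge of `G_u` weighs at least the distance between its ends, whence the lower bound.
For the upper bound, follow a `u`–`v` walk `P` of `K` until it first leaves `{u} ∪ S(u)`, along
an edge `xy`. By the hypotheses on `w'`, the edge `uy` of `G_u` costs at most the weight `σ` of
this initial part, and the rest of `P`, of weight `e`, bounds `dist(y, v)`. If `y = v` or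
`y ∈ S(v)`, the walk `u y v` costs at most `σ + e`. Otherwise take `r_u ∈ R ∩ S(u)` and
`r_v ∈ R ∩ S(v)`; being nearer to `u`, resp. `v`, than `y` is, they make the walk `u y r_v v`
cost at most `σ + 2(1+δ)e + e` and the walk `u r_u v` at most `σ + (1+δ)(2σ + e)`. The first
is good when `e ≤ σ`, the second when `σ ≤ e`: both are then at most `(2+2δ)(σ+e)`.
-/

namespace WeightedGraph

variable {V : Type*}

section Walks

variable {G : SimpleGraph V} (w : Sym2 V → ℝ)

@[simp]
lemma walkWeight_nil {a : V} : walkWeight w (Walk.nil : G.Walk a a) = 0 := rfl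

@[simp]
lemma walkWeight_cons {a b c : V} (h : G.Adj a b) (p : G.Walk b c) :
    walkWeight w (Walk.cons h p) = w s(a, b) + walkWeight w p := by
  simp [walkWeight]

@[simp]
lemma walkWeight_append {a b c : V} (p : G.Walk a b) (q : G.Walk b c) :
    walkWeight w (p.append q) = walkWeight w p + walkWeight w q := by
  simp [walkWeight]

lemma walkWeight_reverse {a b : V} (p : G.Walk a b) :
    walkWeight w p.reverse = walkWeight w p := by
  simp [walkWeight, List.map_reverse, List.sum_reverse]

lemma wdist_le_walkWeight {a b : V} (p : G.Walk a b) :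
    wdist G w a b ≤ ENNReal.ofReal (walkWeight w p) :=
  iInf_le _ p

lemma wdist_le_of_adj {a b : V} {x : ℝ} (h : G.Adj a b) (hx : w s(a, b) ≤ x) :
    wdist G w a b ≤ ENNReal.ofReal x :=
  (wdist_le_walkWeight w (Walk.cons h Walk.nil)).trans
    (ENNReal.ofReal_le_ofReal (by simpa using hx))

lemma wdist_self (a : V) : wdist G w a a = 0 := by
  simpa using wdist_le_walkWeight w (Walk.nil : G.Walk a a)

lemma wdist_comm (a b : V) : wdist G w a b = wdist G w b a := by
  have key : ∀ x y : V, wdist G w x y ≤ wdist G w y x := fun x y =>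
    le_iInf fun p => walkWeight_reverse w p ▸ wdist_le_walkWeight w p.reverse
  exact le_antisymm (key a b) (key b a)

lemma wdist_triangle (a b c : V) : wdist G w a c ≤ wdist G w a b + wdist G w b c := by
  simp only [wdist, ENNReal.iInf_add, ENNReal.add_iInf]
  refine le_iInf fun q => le_iInf fun p => ?_
  calc wdist G w a c ≤ ENNReal.ofReal (walkWeight w (p.append q)) := wdist_le_walkWeight w _
    _ ≤ _ := by rw [walkWeight_append]; exact ENNReal.ofReal_add_le

lemma wdist_le_ofReal_add {a b c : V} {x y : ℝ} (hx : 0 ≤ x) (hy : 0 ≤ y)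
    (hab : wdist G w a b ≤ ENNReal.ofReal x) (hbc : wdist G w b c ≤ ENNReal.ofReal y) :
    wdist G w a c ≤ ENNReal.ofReal (x + y) := by
  rw [ENNReal.ofReal_add hx hy]
  exact (wdist_triangle w a b c).trans (add_le_add hab hbc)

lemma wdist_le_ofReal_mul_wdist {H : SimpleGraph V} (wH : Sym2 V → ℝ) {a b : V} {c : ℝ}
    (hc : 0 < c) (h : ∀ p : G.Walk a b, wdist H wH a b ≤ ENNReal.ofReal (c * walkWeight w p)) :
    wdist H wH a b ≤ ENNReal.ofReal c * wdist G w a b := by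
  conv_rhs => rw [wdist, ENNReal.mul_iInf_of_ne (by simpa using hc) ENNReal.ofReal_ne_top]
  exact le_iInf fun p => (h p).trans (ENNReal.ofReal_mul hc.le).le

lemma _root_.SimpleGraph.Walk.exists_eq_append_cons (T : Set V) {a b : V} (p : G.Walk a b) (ha : a ∈ T)
    (hb : b ∉ T) :
    ∃ (x y : V) (p₁ : G.Walk a x) (h : G.Adj x y) (p₂ : G.Walk y b),
      x ∈ T ∧ y ∉ T ∧ p = p₁.append (Walk.cons h p₂) := by
  induction p with
  | nil => exact absurd ha hb
  | @cons a c b h p ih =>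
    by_cases hc : c ∈ T
    · obtain ⟨x, y, p₁, hxy, p₂, hx, hy, rfl⟩ := ih hc hb
      exact ⟨x, y, Walk.cons h p₁, hxy, p₂, hx, hy, rfl⟩
    · exact ⟨a, c, Walk.nil, h, p, ha, hc, rfl⟩

end Walks

section CompleteGraph

variable (w : Sym2 V → ℝ)

lemma wdist_top_ne_top (a b : V) : wdist ⊤ w a b ≠ ⊤ := by
  rcases eq_or_ne a b with rfl | hab
  · simp [wdist_self]
  · exact ne_top_of_le_ne_top ENNReal.ofReal_ne_top (wdist_le_of_adj w hab le_rfl)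

lemma toReal_wdist_top_comm (a b : V) : (wdist ⊤ w a b).toReal = (wdist ⊤ w b a).toReal := by
  rw [wdist_comm]

lemma toReal_wdist_top_triangle (a b c : V) :
    (wdist ⊤ w a c).toReal ≤ (wdist ⊤ w a b).toReal + (wdist ⊤ w b c).toReal := by
  rw [← ENNReal.toReal_add (wdist_top_ne_top w a b) (wdist_top_ne_top w b c)]
  exact ENNReal.toReal_mono (ENNReal.add_ne_top.2 ⟨wdist_top_ne_top w a b,
    wdist_top_ne_top w b c⟩) (wdist_triangle w a b c)

lemma toReal_wdist_top_le_walkWeight_of_forall_adj {H : SimpleGraph V} {wH : Sym2 V → ℝ}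
    (h : ∀ a b, H.Adj a b → (wdist ⊤ w a b).toReal ≤ wH s(a, b)) {a b : V} (p : H.Walk a b) :
    (wdist ⊤ w a b).toReal ≤ walkWeight wH p := by
  induction p with
  | nil => simp [wdist_self]
  | @cons a b c hab p ih =>
    rw [walkWeight_cons]
    linarith [toReal_wdist_top_triangle w a b c, h a b hab]

lemma wdist_top_le_wdist_of_forall_adj {H : SimpleGraph V} {wH : Sym2 V → ℝ}
    (h : ∀ a b, H.Adj a b → (wdist ⊤ w a b).toReal ≤ wH s(a, b)) (a b : V) :
    wdist ⊤ w a b ≤ wdist H wH a b := by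
  refine le_iInf fun p => ?_
  rw [← ENNReal.ofReal_toReal (wdist_top_ne_top w a b)]
  exact ENNReal.ofReal_le_ofReal (toReal_wdist_top_le_walkWeight_of_forall_adj w h p)

variable {w}

lemma toReal_wdist_top_le_weight (hw : ∀ e ∈ (⊤ : SimpleGraph V).edgeSet, 0 < w e) {a b : V}
    (hab : a ≠ b) : (wdist ⊤ w a b).toReal ≤ w s(a, b) :=
  ENNReal.toReal_le_of_le_ofReal (hw _ hab).le (wdist_le_of_adj w hab le_rfl)

lemma toReal_wdist_top_le_walkWeight (hw : ∀ e ∈ (⊤ : SimpleGraph V).edgeSet, 0 < w e)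
    {a b : V} (p : (⊤ : SimpleGraph V).Walk a b) : (wdist ⊤ w a b).toReal ≤ walkWeight w p :=
  toReal_wdist_top_le_walkWeight_of_forall_adj w (fun _ _ h => toReal_wdist_top_le_weight hw h) p

end CompleteGraph

section Stretch

variable {w : Sym2 V → ℝ} {S : V → Finset V} {δ : ℝ} {R : Set V} {H : SimpleGraph V}
  {wH : Sym2 V → ℝ} {u v ru rv : V}

lemma wdist_le_stretch_of_exit
    (hSnear : ∀ x : V, ∀ y ∈ S x, ∀ y' : V, y' ∉ S x → y' ≠ x →
      wdist ⊤ w x y < wdist ⊤ w x y')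
    (hδ : 0 ≤ δ)
    (hS : ∀ a, ∀ b ∈ S a, wdist H wH a b ≤ ENNReal.ofReal (wdist ⊤ w a b).toReal)
    (hR : ∀ r ∈ R, ∀ z, wdist H wH r z ≤ ENNReal.ofReal ((1 + δ) * (wdist ⊤ w r z).toReal))
    (hruR : ru ∈ R) (hruS : ru ∈ S u) (hrvR : rv ∈ R) (hrvS : rv ∈ S v)
    {y : V} (hyS : y ∉ S u) (hyu : y ≠ u) {σ e : ℝ} (hHuy : wdist H wH u y ≤ ENNReal.ofReal σ)
    (huy : (wdist ⊤ w u y).toReal ≤ σ) (hyv : (wdist ⊤ w y v).toReal ≤ e) :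
    wdist H wH u v ≤ ENNReal.ofReal ((2 + 2 * δ) * (σ + e)) := by
  have hσ : 0 ≤ σ := ENNReal.toReal_nonneg.trans huy
  have he : 0 ≤ e := ENNReal.toReal_nonneg.trans hyv
  have hnn : ∀ a b : V, 0 ≤ (wdist ⊤ w a b).toReal := fun _ _ => ENNReal.toReal_nonneg
  by_cases hclose : y = v ∨ y ∈ S v
  · have hHyv : wdist H wH y v ≤ ENNReal.ofReal (wdist ⊤ w y v).toReal := by
      rcases hclose with rfl | hy
      · simp [wdist_self]
      · rw [wdist_comm, toReal_wdist_top_comm]; exact hS v y hy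
    refine (wdist_le_ofReal_add wH hσ (hnn y v) hHuy hHyv).trans (ENNReal.ofReal_le_ofReal ?_)
    nlinarith
  obtain ⟨hyv', hySv⟩ := not_or.1 hclose
  have hvrv : (wdist ⊤ w v rv).toReal ≤ (wdist ⊤ w v y).toReal :=
    (ENNReal.toReal_strict_mono (wdist_top_ne_top w v y)
      (hSnear v rv hrvS y hySv hyv')).le
  have hury : (wdist ⊤ w u ru).toReal ≤ (wdist ⊤ w u y).toReal :=
    (ENNReal.toReal_strict_mono (wdist_top_ne_top w u y) (hSnear u ru hruS y hyS hyu)).le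
  rw [toReal_wdist_top_comm w v y] at hvrv
  rcases le_total e σ with heσ | hσe
  · have hrvy := toReal_wdist_top_triangle w rv v y
    rw [toReal_wdist_top_comm w rv v, toReal_wdist_top_comm w v y] at hrvy
    have hHyrv : wdist H wH y rv ≤ ENNReal.ofReal ((1 + δ) * (wdist ⊤ w rv y).toReal) := by
      rw [wdist_comm]; exact hR rv hrvR y
    have hHrvv : wdist H wH rv v ≤ ENNReal.ofReal (wdist ⊤ w v rv).toReal := by
      rw [wdist_comm]; exact hS v rv hrvS
    have hHyv := wdist_le_ofReal_add wH (by positivity) (hnn v rv) hHyrv hHrvv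
    refine (wdist_le_ofReal_add wH hσ (by positivity) hHuy hHyv).trans
      (ENNReal.ofReal_le_ofReal ?_)
    nlinarith [mul_le_mul_of_nonneg_left hrvy (by linarith : (0 : ℝ) ≤ 1 + δ)]
  · have hruv := toReal_wdist_top_triangle w ru u v
    have huv := toReal_wdist_top_triangle w u y v
    rw [toReal_wdist_top_comm w ru u] at hruv
    refine (wdist_le_ofReal_add wH (hnn u ru) (by positivity) (hS u ru hruS)
      (hR ru hruR v)).trans (ENNReal.ofReal_le_ofReal ?_)
    nlinarith [mul_le_mul_of_nonneg_left hruv (by linarith : (0 : ℝ) ≤ 1 + δ)]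

lemma wdist_le_stretch_mul_walkWeight (hw : ∀ e ∈ (⊤ : SimpleGraph V).edgeSet, 0 < w e)
    (hSnear : ∀ x : V, ∀ y ∈ S x, ∀ y' : V, y' ∉ S x → y' ≠ x →
      wdist ⊤ w x y < wdist ⊤ w x y')
    (hδ : 0 ≤ δ) {w' : V → ℝ}
    (hw'1 : ∀ y : V, y ≠ u → (wdist ⊤ w u y).toReal ≤ w' y ∧ w' y ≤ w s(u, y))
    (hw'2 : ∀ y : V, y ≠ u → ∀ z ∈ S u, z ≠ y → w' y ≤ (wdist ⊤ w u z).toReal + w s(z, y))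
    (hu : ∀ y, y ≠ u → wdist H wH u y ≤ ENNReal.ofReal (w' y))
    (hS : ∀ a, ∀ b ∈ S a, wdist H wH a b ≤ ENNReal.ofReal (wdist ⊤ w a b).toReal)
    (hR : ∀ r ∈ R, ∀ z, wdist H wH r z ≤ ENNReal.ofReal ((1 + δ) * (wdist ⊤ w r z).toReal))
    (hvu : v ≠ u) (hruR : ru ∈ R) (hruS : ru ∈ S u) (hrvR : rv ∈ R) (hrvS : rv ∈ S v)
    (P : (⊤ : SimpleGraph V).Walk u v) :
    wdist H wH u v ≤ ENNReal.ofReal ((2 + 2 * δ) * walkWeight w P) := by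
  by_cases hvS : v ∈ S u
  · refine (hS u v hvS).trans (ENNReal.ofReal_le_ofReal ?_)
    nlinarith [toReal_wdist_top_le_walkWeight hw P, (ENNReal.toReal_nonneg :
      0 ≤ (wdist ⊤ w u v).toReal)]
  obtain ⟨x, y, p₁, hxy, p₂, hx, hy, rfl⟩ :=
    P.exists_eq_append_cons {z | z = u ∨ z ∈ S u} (Or.inl rfl) (by simp [hvu, hvS])
  simp only [Set.mem_ofPred_eq, not_or] at hx hy
  have hw'y : w' y ≤ (wdist ⊤ w u x).toReal + w s(x, y) := by
    rcases hx with rfl | hx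
    · simpa [wdist_self] using (hw'1 y hy.1).2
    · exact hw'2 y hy.1 x hx (ne_of_mem_of_not_mem hx hy.2)
  refine (wdist_le_stretch_of_exit hSnear hδ hS hR hruR hruS hrvR hrvS hy.2 hy.1
    ((hu y hy.1).trans (ENNReal.ofReal_le_ofReal hw'y)) ((hw'1 y hy.1).1.trans hw'y)
    (toReal_wdist_top_le_walkWeight hw p₂)).trans (ENNReal.ofReal_le_ofReal ?_)
  have hp₁ := toReal_wdist_top_le_walkWeight hw p₁
  rw [walkWeight_append, walkWeight_cons]
  exact mul_le_mul_of_nonneg_left (by linarith) (by positivity)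

end Stretch

end WeightedGraph

open WeightedGraph

theorem stmt_10_general {V : Type*} (w : Sym2 V → ℝ)
    -- `⊤ : SimpleGraph V` is the complete graph on `V`; `w` is positive on its edges
    (hw : ∀ e ∈ (⊤ : SimpleGraph V).edgeSet, 0 < w e)
    -- `S x` is the set of the `k` vertices nearest to `x`
    (S : V → Finset V)
    (hSnot : ∀ x, x ∉ S x)
    (hSnear : ∀ x : V, ∀ y ∈ S x, ∀ y' : V, y' ∉ S x → y' ≠ x →
      wdist (⊤ : SimpleGraph V) w x y < wdist (⊤ : SimpleGraph V) w x y')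
    (δ : ℝ) (hδ : 0 ≤ δ) (R : Set V) (d'' : V → V → ℝ)
    (hd'' : ∀ r ∈ R, ∀ z : V,
      (wdist (⊤ : SimpleGraph V) w r z).toReal ≤ d'' r z ∧
      d'' r z ≤ (1 + δ) * (wdist (⊤ : SimpleGraph V) w r z).toReal)
    (u : V) (w' : V → ℝ)
    (hw'1 : ∀ y : V, y ≠ u →
      (wdist (⊤ : SimpleGraph V) w u y).toReal ≤ w' y ∧ w' y ≤ w s(u, y))
    (hw'2 : ∀ y : V, y ≠ u → ∀ z ∈ S u, z ≠ y →
      w' y ≤ (wdist (⊤ : SimpleGraph V) w u z).toReal + w s(z, y))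
    -- the weighted graph `(Gu, wu)`
    (Gu : SimpleGraph V) (wu : Sym2 V → ℝ)
    (hGu : ∀ a b : V, a ≠ b →
      (Gu.Adj a b ↔ (a = u ∨ b = u ∨ b ∈ S a ∨ a ∈ S b ∨ a ∈ R ∨ b ∈ R)))
    -- the weight of an edge of `Gu` is the minimum of the applicable values
    (hwu : ∀ a b : V, Gu.Adj a b →
      IsLeast {x : ℝ |
        (a = u ∧ x = w' b) ∨ (b = u ∧ x = w' a) ∨
        ((b ∈ S a ∨ a ∈ S b) ∧ x = (wdist (⊤ : SimpleGraph V) w a b).toReal) ∨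
        (a ∈ R ∧ x = d'' a b) ∨ (b ∈ R ∧ x = d'' b a)} (wu s(a, b))) :
    ∀ v : V, v ≠ u → (R ∩ (S u : Set V)).Nonempty → (R ∩ (S v : Set V)).Nonempty →
      wdist (⊤ : SimpleGraph V) w u v ≤ wdist Gu wu u v ∧
      wdist Gu wu u v ≤
        ENNReal.ofReal (2 + 2 * δ) * wdist (⊤ : SimpleGraph V) w u v := by
  rintro v hvu ⟨ru, hruR, hruS⟩ ⟨rv, hrvR, hrvS⟩
  have hwu_ge : ∀ a b, Gu.Adj a b → (wdist ⊤ w a b).toReal ≤ wu s(a, b) := by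
    intro a b hab
    rcases (hwu a b hab).1 with ⟨rfl, hx⟩ | ⟨rfl, hx⟩ | ⟨-, hx⟩ | ⟨ha, hx⟩ | ⟨hb, hx⟩ <;> rw [hx]
    · exact (hw'1 b hab.ne').1
    · exact toReal_wdist_top_comm w a b ▸ (hw'1 a hab.ne).1
    · exact (hd'' a ha b).1
    · exact toReal_wdist_top_comm w a b ▸ (hd'' b hb a).1
  have hu : ∀ y, y ≠ u → wdist Gu wu u y ≤ ENNReal.ofReal (w' y) := fun y hy =>
    have hadj := (hGu u y hy.symm).2 (Or.inl rfl)
    wdist_le_of_adj wu hadj ((hwu u y hadj).2 (Or.inl ⟨rfl, rfl⟩))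
  have hS : ∀ a, ∀ b ∈ S a, wdist Gu wu a b ≤ ENNReal.ofReal (wdist ⊤ w a b).toReal :=
    fun a b hb =>
    have hadj := (hGu a b (ne_of_mem_of_not_mem hb (hSnot a)).symm).2 (by simp [hb])
    wdist_le_of_adj wu hadj ((hwu a b hadj).2 (Or.inr (Or.inr (Or.inl ⟨Or.inl hb, rfl⟩))))
  have hR : ∀ r ∈ R, ∀ z, wdist Gu wu r z ≤
      ENNReal.ofReal ((1 + δ) * (wdist ⊤ w r z).toReal) := by
    intro r hr z
    rcases eq_or_ne r z with rfl | hrz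
    · simp [wdist_self]
    have hadj := (hGu r z hrz).2 (by simp [hr])
    exact wdist_le_of_adj wu hadj (((hwu r z hadj).2
      (Or.inr (Or.inr (Or.inr (Or.inl ⟨hr, rfl⟩))))).trans (hd'' r hr z).2)
  refine ⟨wdist_top_le_wdist_of_forall_adj w hwu_ge u v,
    wdist_le_ofReal_mul_wdist w wu (by positivity) fun P => ?_⟩
  exact wdist_le_stretch_mul_walkWeight hw hSnear hδ hw'1 hw'2 hu hS hR hvu hruR hruS hrvR hrvS P

theorem stmt_10 {V : Type*} [Fintype V] (w : Sym2 V → ℝ)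
    -- `⊤ : SimpleGraph V` is the complete graph on `V`; `w` is positive on its edges
    (hw : ∀ e ∈ (⊤ : SimpleGraph V).edgeSet, 0 < w e)
    (k : ℕ) (hk : 1 ≤ k) (hcard : k + 1 ≤ Fintype.card V)
    -- the distances from each vertex are pairwise distinct
    (hdistinct : ∀ x y y' : V, y ≠ x → y' ≠ x →
      wdist (⊤ : SimpleGraph V) w x y = wdist (⊤ : SimpleGraph V) w x y' → y = y')
    -- `S x` is the set of the `k` vertices nearest to `x`
    (S : V → Finset V)
    (hSnot : ∀ x, x ∉ S x) (hScard : ∀ x, (S x).card = k)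
    (hSnear : ∀ x : V, ∀ y ∈ S x, ∀ y' : V, y' ∉ S x → y' ≠ x →
      wdist (⊤ : SimpleGraph V) w x y < wdist (⊤ : SimpleGraph V) w x y')
    (δ : ℝ) (hδ : 0 ≤ δ) (R : Set V) (d'' : V → V → ℝ)
    (hd'' : ∀ r ∈ R, ∀ z : V,
      (wdist (⊤ : SimpleGraph V) w r z).toReal ≤ d'' r z ∧
      d'' r z ≤ (1 + δ) * (wdist (⊤ : SimpleGraph V) w r z).toReal)
    (u : V) (w' : V → ℝ)
    (hw'1 : ∀ y : V, y ≠ u →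
      (wdist (⊤ : SimpleGraph V) w u y).toReal ≤ w' y ∧ w' y ≤ w s(u, y))
    (hw'2 : ∀ y : V, y ≠ u → ∀ z ∈ S u, z ≠ y →
      w' y ≤ (wdist (⊤ : SimpleGraph V) w u z).toReal + w s(z, y))
    -- the weighted graph `(Gu, wu)`
    (Gu : SimpleGraph V) (wu : Sym2 V → ℝ)
    (hGu : ∀ a b : V, a ≠ b →
      (Gu.Adj a b ↔ (a = u ∨ b = u ∨ b ∈ S a ∨ a ∈ S b ∨ a ∈ R ∨ b ∈ R)))
    -- the weight of an edge of `Gu` is the minimum of the applicable values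
    (hwu : ∀ a b : V, Gu.Adj a b →
      IsLeast {x : ℝ |
        (a = u ∧ x = w' b) ∨ (b = u ∧ x = w' a) ∨
        ((b ∈ S a ∨ a ∈ S b) ∧ x = (wdist (⊤ : SimpleGraph V) w a b).toReal) ∨
        (a ∈ R ∧ x = d'' a b) ∨ (b ∈ R ∧ x = d'' b a)} (wu s(a, b))) :
    ∀ v : V, v ≠ u → (R ∩ (S u : Set V)).Nonempty → (R ∩ (S v : Set V)).Nonempty →
      wdist (⊤ : SimpleGraph V) w u v ≤ wdist Gu wu u v ∧
      wdist Gu wu u v ≤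
        ENNReal.ofReal (2 + 2 * δ) * wdist (⊤ : SimpleGraph V) w u v :=
  stmt_10_general w hw S hSnot hSnear δ hδ R d'' hd'' u w' hw'1 hw'2 Gu wu hGu hwu
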